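/- arXiv:1505.04216 — 7 statements merged into one kernel-verified Lean document; each statement's English description precedes it below -/
import Mathlib

section
/- Let I be a relational instance and k ∈ ℕ. Define a ≃_k b iff (I,a) ≤_k (I,b) and (I,b) ≤_k (I,a), which is an equivalence relation on dom(I). Let I'' = I/≃_k be the quotient instance (whose facts are the images of facts of I under the map sending each element to its ≃_k-class). Then the map sending each equivalence class A ∈ dom(I'') to an arbitrary chosen representative a ∈ A is a k-bounded simulation from I'' to I; that is, (I'', A) ≤_k (I, a) for every class A and every a ∈ A. -/
/-- The `n`-bounded simulation relation between pointed relational instances. -/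
def bsim {Rel : Type} {arity : Rel → ℕ} {V V' : Type}
    (I : Set ((R : Rel) × (Fin (arity R) → V)))
    (I' : Set ((R : Rel) × (Fin (arity R) → V'))) :
    ℕ → V → V' → Prop
  | 0, _, _ => True
  | n + 1, a, b =>
      ∀ F ∈ I, ∀ p : Fin (arity F.1), F.2 p = a →
        ∃ g : Fin (arity F.1) → V',
          (⟨F.1, g⟩ : (R : Rel) × (Fin (arity R) → V')) ∈ I' ∧ g p = b ∧
          ∀ q : Fin (arity F.1), bsim I I' n (F.2 q) (g q)

theorem bsim_refl {Rel : Type} {arity : Rel → ℕ} {V : Type}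
    (I : Set ((R : Rel) × (Fin (arity R) → V))) :
    ∀ n a, bsim I I n a a := by
  intro n
  induction n with
  | zero => intro a; trivial
  | succ n ih =>
    intro a F hF p hp
    exact ⟨F.2, hF, hp, fun q => ih _⟩

theorem bsim_mono {Rel : Type} {arity : Rel → ℕ} {V V' : Type}
    (I : Set ((R : Rel) × (Fin (arity R) → V)))
    (I' : Set ((R : Rel) × (Fin (arity R) → V'))) :
    ∀ m n, m ≤ n → ∀ a b, bsim I I' n a b → bsim I I' m a b := by
  intro m
  induction m with
  | zero => intro n _ a b _; trivial
  | succ m ih =>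
    intro n hmn a b h
    match n, hmn with
    | n + 1, hmn =>
      intro F hF p hp
      obtain ⟨g, hg, hgp, hq⟩ := h F hF p hp
      exact ⟨g, hg, hgp, fun q => ih n (Nat.succ_le_succ_iff.mp hmn) _ _ (hq q)⟩

theorem bsim_trans {Rel : Type} {arity : Rel → ℕ} {V₁ V₂ V₃ : Type}
    (I₁ : Set ((R : Rel) × (Fin (arity R) → V₁)))
    (I₂ : Set ((R : Rel) × (Fin (arity R) → V₂)))
    (I₃ : Set ((R : Rel) × (Fin (arity R) → V₃))) :
    ∀ n a b c, bsim I₁ I₂ n a b → bsim I₂ I₃ n b c → bsim I₁ I₃ n a c := by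
  intro n
  induction n with
  | zero => intro a b c _ _; trivial
  | succ n ih =>
    intro a b c h1 h2 F hF p hp
    obtain ⟨g, hg, hgp, hq⟩ := h1 F hF p hp
    obtain ⟨g', hg', hgp', hq'⟩ := h2 ⟨F.1, g⟩ hg p hgp
    exact ⟨g', hg', hgp', fun q => ih _ _ _ (hq q) (hq' q)⟩

theorem stmt5_key {Rel V : Type} {arity : Rel → ℕ}
    (I : Set ((R : Rel) × (Fin (arity R) → V))) (k : ℕ) :
    ∀ n, n ≤ k → ∀ a b : V, bsim I I n a b →
      bsim
        ((fun F : (R : Rel) × (Fin (arity R) → V) =>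
            (⟨F.1, fun p => {c : V | bsim I I k (F.2 p) c ∧ bsim I I k c (F.2 p)}⟩ :
              (R : Rel) × (Fin (arity R) → Set V))) '' I)
        I n
        {c : V | bsim I I k a c ∧ bsim I I k c a} b := by
  intro n
  induction n with
  | zero => intro _ a b _; trivial
  | succ n ih =>
    intro hnk a b hab F hF p hp
    obtain ⟨F₀, hF₀, rfl⟩ := hF
    -- hp : class (F₀.2 p) = class a
    have hmem : F₀.2 p ∈ {c : V | bsim I I k a c ∧ bsim I I k c a} := by
      rw [← hp]
      exact ⟨bsim_refl I k _, bsim_refl I k _⟩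
    have hpa : bsim I I (n + 1) (F₀.2 p) b :=
      bsim_trans I I I (n + 1) _ _ _ (bsim_mono I I (n + 1) k hnk _ _ hmem.2) hab
    obtain ⟨g, hg, hgp, hq⟩ := hpa F₀ hF₀ p rfl
    exact ⟨g, hg, hgp, fun q => ih (Nat.le_of_succ_le hnk) _ _ (hq q)⟩

/-- `≃_k` (mutual `k`-bounded simulation within `I`) is an
equivalence relation, and mapping each `≃_k`-class of the quotient instance
`I/≃_k` to any of its representatives is a `k`-bounded simulation from the
quotient instance to `I`. -/
theorem stmt_5 {Rel V : Type} {arity : Rel → ℕ}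
    (I : Set ((R : Rel) × (Fin (arity R) → V))) (k : ℕ) :
    Equivalence (fun a b : V => bsim I I k a b ∧ bsim I I k b a) ∧
    ∀ a b : V, (bsim I I k a b ∧ bsim I I k b a) →
      bsim
        ((fun F : (R : Rel) × (Fin (arity R) → V) =>
            (⟨F.1, fun p => {c : V | bsim I I k (F.2 p) c ∧ bsim I I k c (F.2 p)}⟩ :
              (R : Rel) × (Fin (arity R) → Set V))) '' I)
        I k
        {c : V | bsim I I k a c ∧ bsim I I k c a} b := by
  constructor
  · exact ⟨fun a => ⟨bsim_refl I k a, bsim_refl I k a⟩,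
      fun h => ⟨h.2, h.1⟩,
      fun h1 h2 => ⟨bsim_trans I I I k _ _ _ h1.1 h2.1,
        bsim_trans I I I k _ _ _ h2.2 h1.2⟩⟩
  · intro a b hab
    exact stmt5_key I k k le_rfl a b hab.1
end

section
/- Let R be a relation and Σ_FD a set of functional dependencies over R. Say a set O of positions of R is semantically safe if O is empty or for every position r ∉ O there exists a position p such that Σ_FD semantically entails the unary key dependency p → O (i.e., every instance satisfying Σ_FD also satisfies p → q for all q ∈ O) but Σ_FD does not semantically entail p → r. Then: if O is semantically safe, there is no FD L → r in Σ_FD with L ⊆ O and r ∉ O. Consequently, any instance I in which the overlap of every pair of facts is semantically safe satisfies Σ_FD. -/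
/-- An instance `I` (a set of tuples `Pos → V`) satisfies the functional
dependency `L → r`. -/
def FDSat {Pos V : Type} (I : Set (Pos → V)) (L : Set Pos) (r : Pos) : Prop :=
  ∀ F ∈ I, ∀ F' ∈ I, (∀ l ∈ L, F l = F' l) → F r = F' r

/-- Semantic entailment of an FD from a set of FDs: every instance (over any
domain) satisfying all FDs of `Sfd` satisfies `L → r`. -/
def FDEntails {Pos : Type} (Sfd : Set (Set Pos × Pos)) (L : Set Pos) (r : Pos) : Prop :=
  ∀ (V : Type) (I : Set (Pos → V)),
    (∀ φ ∈ Sfd, FDSat I φ.1 φ.2) → FDSat I L r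

/-- A set `O` of positions is semantically safe for `Sfd`: it is empty, or for
every position `r ∉ O` there is a position `p` such that `Sfd` entails the
unary key dependency `p → O` but does not entail `p → r`. -/
def SemSafe {Pos : Type} (Sfd : Set (Set Pos × Pos)) (O : Set Pos) : Prop :=
  O = ∅ ∨
  ∀ r : Pos, r ∉ O →
    ∃ p : Pos, (∀ q ∈ O, FDEntails Sfd {p} q) ∧ ¬ FDEntails Sfd {p} r

/-- If `O` is semantically safe then no FD `L → r` of `Sfd` has
`L ⊆ O` and `r ∉ O`; consequently, any instance in which the overlap of every
pair of facts is semantically safe satisfies `Sfd`. -/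
theorem stmt_11 {Pos : Type} (Sfd : Set (Set Pos × Pos))
    (hne : ∀ φ ∈ Sfd, φ.1.Nonempty) :
    (∀ O : Set Pos, SemSafe Sfd O →
        ¬ ∃ φ ∈ Sfd, φ.1 ⊆ O ∧ φ.2 ∉ O) ∧
    (∀ (V : Type) (I : Set (Pos → V)),
        (∀ F ∈ I, ∀ F' ∈ I, SemSafe Sfd {q : Pos | F q = F' q}) →
        ∀ φ ∈ Sfd, FDSat I φ.1 φ.2) := by
  have part1 : ∀ O : Set Pos, SemSafe Sfd O → ¬ ∃ φ ∈ Sfd, φ.1 ⊆ O ∧ φ.2 ∉ O := by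
    intro O hsafe
    rintro ⟨φ, hφ, hL, hr⟩
    obtain ⟨l, hl⟩ := hne φ hφ
    cases hsafe with
    | inl hO => exact absurd (hO ▸ hL hl) (Set.notMem_empty l)
    | inr h =>
      obtain ⟨p, hpO, hpr⟩ := h φ.2 hr
      apply hpr
      intro V I hI F hF F' hF' hagree
      -- F and F' agree at p, hence on all of O, hence on L, hence at φ.2
      have hO : ∀ q ∈ O, F q = F' q := fun q hq =>
        hpO q hq V I hI F hF F' hF' hagree
      exact hI φ hφ F hF F' hF' (fun x hx => hO x (hL hx))
  refine ⟨part1, ?_⟩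
  intro V I hover φ hφ F hF F' hF' hagree
  set O : Set Pos := {q : Pos | F q = F' q}
  by_contra hne2
  exact part1 O (hover F hF F' hF') ⟨φ, hφ, fun x hx => hagree x hx, hne2⟩
end

section
/- Let R be a relation, Σ_FD a set of FDs over R, and O a subset of the positions of R. Define the FD projection Σ_FD|_O to consist of: (i) every FD L → r of Σ_FD with L ⊆ O and r ∈ O, and (ii) for every FD L → r of Σ_FD with L ⊆ O and r ∉ O, the key dependency L → O (i.e., L → q for every q ∈ O). Let F, F' be two facts of an instance I such that OVL(F,F') ⊊ O and such that the projections π_O(F), π_O(F') do not jointly violate any dependency of Σ_FD|_O. Then F and F' do not jointly violate any FD of Σ_FD. -/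
/-- The FD projection of a set of FDs `Sfd` to a set `O` of positions: the FDs
`L → r` of `Sfd` with `L ⊆ O` and `r ∈ O`, plus, for every FD `L → r` of `Sfd`
with `L ⊆ O` and `r ∉ O`, the key dependency `L → O` (all FDs `L → q`, `q ∈ O`). -/
def fdProj {Pos : Type} (Sfd : Set (Set Pos × Pos)) (O : Set Pos) :
    Set (Set Pos × Pos) :=
  {φ | φ ∈ Sfd ∧ φ.1 ⊆ O ∧ φ.2 ∈ O} ∪
  {ψ | ∃ φ ∈ Sfd, φ.1 ⊆ O ∧ φ.2 ∉ O ∧ ψ.1 = φ.1 ∧ ψ.2 ∈ O}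

/-- If the overlap of two facts `F, F'` is strictly contained in
`O` and the projections of `F, F'` to `O` do not violate any dependency of the
FD projection of `Sfd` to `O`, then `F` and `F'` violate no FD of `Sfd`. -/
theorem stmt_12 {Pos V : Type} (Sfd : Set (Set Pos × Pos)) (O : Set Pos)
    (F F' : Pos → V)
    (hovl : {q : Pos | F q = F' q} ⊂ O)
    (hproj : ∀ φ ∈ fdProj Sfd O, (∀ l ∈ φ.1, F l = F' l) → F φ.2 = F' φ.2) :
    ∀ φ ∈ Sfd, (∀ l ∈ φ.1, F l = F' l) → F φ.2 = F' φ.2 := by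
  rintro ⟨L, r⟩ hφ hL
  have hLO : L ⊆ O := fun l hl => hovl.1 (hL l hl)
  by_cases hr : r ∈ O
  · exact hproj (L, r) (Or.inl ⟨hφ, hLO, hr⟩) hL
  · exfalso
    have hOsub : O ⊆ {q : Pos | F q = F' q} := fun q hq =>
      hproj (L, q) (Or.inr ⟨(L, r), hφ, hLO, hr, rfl, hq⟩) hL
    exact hovl.2 hOsub
end

section
/- Let I be an instance, G a group, and for each fact F of I and each position i of F fix a group element λ^F_i ∈ G. Define the product instance I' = I × G to contain, for each fact F = R(a₁,…,a_m) of I and each g ∈ G, the fact R((a₁, g·λ^F_1),…,(a_m, g·λ^F_m)). Then for any unary inclusion dependency τ : R^p ⊆ S^q (asserting that every element occurring at position p of relation R also occurs at position q of relation S), if I satisfies τ then I' satisfies τ. Moreover, for any element a ∈ dom(I) and position R^p, a occurs at position R^p in I if and only if (a,g) occurs at position R^p in I' for every g ∈ G. -/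
/-- The simple product `I × G` (each fact `F` of `I` copied for
every `g ∈ G`, with the element at position `i` paired with `g * λ^F_i`)
preserves all unary inclusion dependencies satisfied by `I`; moreover an
element `a` occurs at a position `R^p` in `I` iff `(a, g)` occurs at `R^p`
in the product for every `g ∈ G`. -/
theorem stmt_14 {Rel V : Type} {arity : Rel → ℕ} (G : Type) [Group G]
    (I : Set ((R : Rel) × (Fin (arity R) → V)))
    (lam : (F : (R : Rel) × (Fin (arity R) → V)) → Fin (arity F.1) → G)
    (I' : Set ((R : Rel) × (Fin (arity R) → V × G)))
    (hI' : ∀ F' : (R : Rel) × (Fin (arity R) → V × G),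
      F' ∈ I' ↔ ∃ F ∈ I, ∃ g : G,
        F' = ⟨F.1, fun i => (F.2 i, g * lam F i)⟩) :
    (∀ (R S : Rel) (p : Fin (arity R)) (q : Fin (arity S)),
      (∀ a : V,
        (∃ t : Fin (arity R) → V, (⟨R, t⟩ : (R : Rel) × (Fin (arity R) → V)) ∈ I ∧ t p = a) →
        (∃ u : Fin (arity S) → V, (⟨S, u⟩ : (R : Rel) × (Fin (arity R) → V)) ∈ I ∧ u q = a)) →
      (∀ b : V × G,
        (∃ t : Fin (arity R) → V × G, (⟨R, t⟩ : (R : Rel) × (Fin (arity R) → V × G)) ∈ I' ∧ t p = b) →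
        (∃ u : Fin (arity S) → V × G, (⟨S, u⟩ : (R : Rel) × (Fin (arity R) → V × G)) ∈ I' ∧ u q = b))) ∧
    (∀ (a : V) (R : Rel) (p : Fin (arity R)),
      (∃ t : Fin (arity R) → V, (⟨R, t⟩ : (R : Rel) × (Fin (arity R) → V)) ∈ I ∧ t p = a) ↔
      ∀ g : G, ∃ t : Fin (arity R) → V × G,
        (⟨R, t⟩ : (R : Rel) × (Fin (arity R) → V × G)) ∈ I' ∧ t p = (a, g)) := by
  constructor
  · rintro R S p q hτ ⟨va, vg⟩ ⟨t, ht, htp⟩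
    obtain ⟨⟨R0, t0⟩, hF, g, heq⟩ := (hI' _).1 ht
    injection heq with h1 h2
    subst h1
    have h2' := eq_of_heq h2
    subst h2'
    simp only at htp
    obtain ⟨u, hu, huq⟩ := hτ (t0 p) ⟨t0, hF, rfl⟩
    refine ⟨fun i => (u i, (vg * (lam ⟨S, u⟩ q)⁻¹) * lam ⟨S, u⟩ i), ?_, ?_⟩
    · exact (hI' _).2 ⟨⟨S, u⟩, hu, vg * (lam ⟨S, u⟩ q)⁻¹, rfl⟩
    · have ha : t0 p = va := congrArg Prod.fst htp
      simp [huq, ha]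
  · intro a R p
    constructor
    · rintro ⟨t, ht, rfl⟩ g
      refine ⟨fun i => (t i, (g * (lam ⟨R, t⟩ p)⁻¹) * lam ⟨R, t⟩ i), ?_, ?_⟩
      · exact (hI' _).2 ⟨⟨R, t⟩, ht, g * (lam ⟨R, t⟩ p)⁻¹, rfl⟩
      · simp
    · intro h
      obtain ⟨t, ht, htp⟩ := h 1
      obtain ⟨⟨R0, t0⟩, hF, g, heq⟩ := (hI' _).1 ht
      injection heq with h1 h2
      subst h1
      have h2' := eq_of_heq h2
      subst h2'
      exact ⟨t0, hF, congrArg Prod.fst htp⟩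
end

section
/- Let I₀ ⊆ I and I₀ ⊆ I₁ be instances and h : I → I₁ a homomorphism that is the identity on dom(I₀) and maps facts of I \ I₀ to facts of I₁ \ I₀. Let G be a group with labels λ^F_i ∈ G fixed for each fact F of I₁ \ I₀ and position i. Define the simple product (I₁, I₀) ⊗ G as containing I₀ × G (each fact of I₀ copied for each g ∈ G with all components paired with the same g) together with, for each fact F = R(a₁,…,a_m) of I₁ \ I₀ and g ∈ G, the fact R((a₁, g·λ^F_1),…,(a_m, g·λ^F_m)). Define the mixed product (I, I₀) ⊗^h G analogously on I, using for a fact F of I \ I₀ the labels λ^{h(F)}_i of its h-image. Then the map (a,g) ↦ (h(a), g) is a homomorphism from the mixed product (I, I₀) ⊗^h G to the simple product (I₁, I₀) ⊗ G, and it is the identity on dom(I₀) × G. -/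
/-- The simple product `(I₁, I₀) ⊗ G`: facts of `I₀` are copied with a constant
group coordinate `g`; facts of `I₁ \ I₀` are copied with coordinates
`g * λ^F_i`. -/
def simpleProd {Rel V : Type} {arity : Rel → ℕ} (G : Type) [Group G]
    (I₁ I₀ : Set ((R : Rel) × (Fin (arity R) → V)))
    (lam : (F : (R : Rel) × (Fin (arity R) → V)) → Fin (arity F.1) → G) :
    Set ((R : Rel) × (Fin (arity R) → V × G)) :=
  {F' | (∃ F ∈ I₀, ∃ g : G, F' = ⟨F.1, fun i => (F.2 i, g)⟩) ∨
        (∃ F ∈ I₁, F ∉ I₀ ∧ ∃ g : G, F' = ⟨F.1, fun i => (F.2 i, g * lam F i)⟩)}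

/-- The mixed product `(I, I₀) ⊗^h G`: like the simple product, but a fact `F`
of `I \ I₀` uses the labels of its `h`-image. -/
def mixedProd {Rel V : Type} {arity : Rel → ℕ} (G : Type) [Group G]
    (I I₀ : Set ((R : Rel) × (Fin (arity R) → V))) (h : V → V)
    (lam : (F : (R : Rel) × (Fin (arity R) → V)) → Fin (arity F.1) → G) :
    Set ((R : Rel) × (Fin (arity R) → V × G)) :=
  {F' | (∃ F ∈ I₀, ∃ g : G, F' = ⟨F.1, fun i => (F.2 i, g)⟩) ∨
        (∃ F ∈ I, F ∉ I₀ ∧ ∃ g : G,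
          F' = ⟨F.1, fun i => (F.2 i, g * lam ⟨F.1, h ∘ F.2⟩ i)⟩)}

/-- The map `(a, g) ↦ (h a, g)` is a homomorphism from the mixed
product `(I, I₀) ⊗^h G` to the simple product `(I₁, I₀) ⊗ G`, and it is the
identity on `dom(I₀) × G`. -/
theorem stmt_15 {Rel V : Type} {arity : Rel → ℕ} (G : Type) [Group G]
    (I I₀ I₁ : Set ((R : Rel) × (Fin (arity R) → V))) (h : V → V)
    (lam : (F : (R : Rel) × (Fin (arity R) → V)) → Fin (arity F.1) → G)
    (hI₀I : I₀ ⊆ I) (hI₀I₁ : I₀ ⊆ I₁)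
    (hhom : ∀ F ∈ I, (⟨F.1, h ∘ F.2⟩ : (R : Rel) × (Fin (arity R) → V)) ∈ I₁)
    (hid : ∀ a : V, (∃ F ∈ I₀, ∃ p, F.2 p = a) → h a = a)
    (hout : ∀ F ∈ I, F ∉ I₀ →
      (⟨F.1, h ∘ F.2⟩ : (R : Rel) × (Fin (arity R) → V)) ∉ I₀) :
    (∀ F' ∈ mixedProd G I I₀ h lam,
        (⟨F'.1, fun i => (h (F'.2 i).1, (F'.2 i).2)⟩ :
          (R : Rel) × (Fin (arity R) → V × G)) ∈ simpleProd G I₁ I₀ lam) ∧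
    (∀ (a : V) (g : G), (∃ F ∈ I₀, ∃ p, F.2 p = a) →
        (h a, g) = (a, g)) := by
  constructor
  · rintro F' (⟨F, hF, g, rfl⟩ | ⟨F, hF, hFn, g, rfl⟩)
    · left
      refine ⟨F, hF, g, ?_⟩
      simp only
      congr 1
      funext i
      simp [hid (F.2 i) ⟨F, hF, i, rfl⟩]
    · right
      refine ⟨⟨F.1, h ∘ F.2⟩, hhom F hF, hout F hF hFn, g, rfl⟩
  · intro a g ha
    rw [hid a ha]
end

section
/- Let I₀ ⊆ I be instances, G a group, h : I → I₁ a homomorphism into a superinstance I₁ of I₀ that is the identity on I₀ and maps I \ I₀ into I₁ \ I₀, with labels λ^F_i ∈ G for facts F of I₁ \ I₀. Suppose I is cautious for h: for any two facts F = R(a₁,…,a_m) and F' = R(b₁,…,b_m) of I with a_i = b_i for some position i, either both F, F' ∈ I₀, or h(a_j) = h(b_j) for all positions j and h(F) = h(F'). Then for any functional dependency φ : L → r over R, if I satisfies φ then the mixed product (I, I₀) ⊗^h G satisfies φ. -/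
/-- If `I` is cautious for `h` (any two facts of `I` of the same
relation agreeing at some position are either both in `I₀`, or have equal
`h`-images), then any functional dependency `L → r` satisfied by `I` is
satisfied by the mixed product `(I, I₀) ⊗^h G`. -/
theorem stmt_16 {Rel V : Type} {arity : Rel → ℕ} (G : Type) [Group G]
    (I I₀ I₁ : Set ((R : Rel) × (Fin (arity R) → V))) (h : V → V)
    (lam : (F : (R : Rel) × (Fin (arity R) → V)) → Fin (arity F.1) → G)
    (hI₀I : I₀ ⊆ I) (hI₀I₁ : I₀ ⊆ I₁)
    (hhom : ∀ F ∈ I, (⟨F.1, h ∘ F.2⟩ : (R : Rel) × (Fin (arity R) → V)) ∈ I₁)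
    (hid : ∀ a : V, (∃ F ∈ I₀, ∃ p, F.2 p = a) → h a = a)
    (hout : ∀ F ∈ I, F ∉ I₀ →
      (⟨F.1, h ∘ F.2⟩ : (R : Rel) × (Fin (arity R) → V)) ∈ I₁ ∧
      (⟨F.1, h ∘ F.2⟩ : (R : Rel) × (Fin (arity R) → V)) ∉ I₀)
    (hcautious : ∀ (R₀ : Rel) (t u : Fin (arity R₀) → V),
        (⟨R₀, t⟩ : (R : Rel) × (Fin (arity R) → V)) ∈ I →
        (⟨R₀, u⟩ : (R : Rel) × (Fin (arity R) → V)) ∈ I →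
        (∃ i, t i = u i) →
        ((⟨R₀, t⟩ : (R : Rel) × (Fin (arity R) → V)) ∈ I₀ ∧
         (⟨R₀, u⟩ : (R : Rel) × (Fin (arity R) → V)) ∈ I₀) ∨
        (∀ j, h (t j) = h (u j)))
    (R : Rel) (L : Set (Fin (arity R))) (r : Fin (arity R)) (hL : L.Nonempty)
    (hsat : ∀ t u : Fin (arity R) → V,
        (⟨R, t⟩ : (R : Rel) × (Fin (arity R) → V)) ∈ I →
        (⟨R, u⟩ : (R : Rel) × (Fin (arity R) → V)) ∈ I →
        (∀ l ∈ L, t l = u l) → t r = u r) :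
    ∀ t u : Fin (arity R) → V × G,
      (⟨R, t⟩ : (R : Rel) × (Fin (arity R) → V × G)) ∈ mixedProd G I I₀ h lam →
      (⟨R, u⟩ : (R : Rel) × (Fin (arity R) → V × G)) ∈ mixedProd G I I₀ h lam →
      (∀ l ∈ L, t l = u l) → t r = u r := by
  intro t u ht hu hLtu
  obtain ⟨l0, hl0⟩ := hL
  rcases ht with ⟨⟨R₁, a⟩, haI₀, g, hta⟩ | ⟨⟨R₁, a⟩, haI, haI₀, g, hta⟩ <;>
    rcases hu with ⟨⟨R₂, b⟩, hbI₀, g', hub⟩ | ⟨⟨R₂, b⟩, hbI, hbI₀, g', hub⟩ <;>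
      obtain ⟨hR₁, ht'⟩ := Sigma.mk.inj_iff.mp hta <;> subst hR₁ <;>
      obtain ⟨hR₂, hu'⟩ := Sigma.mk.inj_iff.mp hub <;> subst hR₂ <;>
      replace ht' := eq_of_heq ht' <;> replace hu' := eq_of_heq hu' <;>
      subst ht' <;> subst hu' <;> simp only [] at hLtu
  -- Case 1: both from I₀
  · have hab : ∀ l ∈ L, a l = b l := fun l hl => congrArg Prod.fst (hLtu l hl)
    have hg : g = g' := congrArg Prod.snd (hLtu l0 hl0)
    have har := hsat a b (hI₀I haI₀) (hI₀I hbI₀) hab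
    simp [har, hg]
  -- Case 2: a from I₀, b outside: impossible
  · exfalso
    have hab : a l0 = b l0 := congrArg Prod.fst (hLtu l0 hl0)
    rcases hcautious R a b (hI₀I haI₀) hbI ⟨l0, hab⟩ with ⟨_, hbin⟩ | hj
    · exact hbI₀ hbin
    · have hba : h ∘ b = a := funext fun j => by
        rw [Function.comp_apply, ← hj j, hid (a j) ⟨⟨R, a⟩, haI₀, j, rfl⟩]
      exact (hout ⟨R, b⟩ hbI hbI₀).2 (by rw [show (⟨R, h ∘ b⟩ : (R : Rel) × (Fin (arity R) → V)) = ⟨R, a⟩ from by rw [hba]]; exact haI₀)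
  -- Case 3: a outside, b from I₀: impossible
  · exfalso
    have hab : a l0 = b l0 := congrArg Prod.fst (hLtu l0 hl0)
    rcases hcautious R a b haI (hI₀I hbI₀) ⟨l0, hab⟩ with ⟨hain, _⟩ | hj
    · exact haI₀ hain
    · have hba : h ∘ a = b := funext fun j => by
        rw [Function.comp_apply, hj j, hid (b j) ⟨⟨R, b⟩, hbI₀, j, rfl⟩]
      exact (hout ⟨R, a⟩ haI haI₀).2 (by rw [show (⟨R, h ∘ a⟩ : (R : Rel) × (Fin (arity R) → V)) = ⟨R, b⟩ from by rw [hba]]; exact hbI₀)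
  -- Case 4: both outside
  · have hab0 : a l0 = b l0 := congrArg Prod.fst (hLtu l0 hl0)
    rcases hcautious R a b haI hbI ⟨l0, hab0⟩ with ⟨hain, _⟩ | hj
    · exact absurd hain haI₀
    · have hba : h ∘ a = h ∘ b := funext fun j => hj j
      have hab : ∀ l ∈ L, a l = b l := fun l hl => congrArg Prod.fst (hLtu l hl)
      have har := hsat a b haI hbI hab
      have hg : g * lam ⟨R, h ∘ a⟩ l0 = g' * lam ⟨R, h ∘ b⟩ l0 :=
        congrArg Prod.snd (hLtu l0 hl0)
      rw [hba] at hg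
      have hgg : g = g' := mul_right_cancel hg
      have hlam : lam ⟨R, h ∘ a⟩ = lam ⟨R, h ∘ b⟩ := by rw [hba]
      simp only [har, hgg, hlam]
end

section
/- Let Pos be a set of positions, and let Σ_UID be a set of ordered pairs of positions ('UIDs' τ : p ⊆ q with p ≠ q) that is transitively closed: whenever (p,q) ∈ Σ_UID and (q,r) ∈ Σ_UID with p ≠ r, then (p,r) ∈ Σ_UID. Let →_UFD be a fixed transitive relation on Pos, and define the relation ↣ on Σ_UID by: (p,q) ↣ (p',q') iff (p',q) ∈ →_UFD and p' ≠ q. Then every strongly connected component of the directed graph (Σ_UID, ↣) is transitively closed: if (p,q) and (q,r) belong to the same SCC P of ↣ and p ≠ r, then (p,r) ∈ P. -/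
/-- Let `Suid` be a transitively closed set of UIDs (pairs of
distinct positions) and `↣` the functional-ID-path relation induced by a
transitive set `ufd` of unary FDs: `(p,q) ↣ (p',q')` iff both UIDs are in
`Suid`, `ufd p' q` holds and `p' ≠ q`. Then every strongly connected component
of the graph `(Suid, ↣)` is transitively closed. -/
theorem stmt_18 {Pos : Type} (ufd : Pos → Pos → Prop) (hufd : Transitive ufd)
    (Suid : Set (Pos × Pos))
    (hirr : ∀ τ ∈ Suid, τ.1 ≠ τ.2)
    (htc : ∀ p q r : Pos, (p, q) ∈ Suid → (q, r) ∈ Suid → p ≠ r →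
      (p, r) ∈ Suid)
    (step : Pos × Pos → Pos × Pos → Prop)
    (hstep : ∀ τ τ' : Pos × Pos,
      step τ τ' ↔ τ ∈ Suid ∧ τ' ∈ Suid ∧ ufd τ'.1 τ.2 ∧ τ'.1 ≠ τ.2)
    (P : Set (Pos × Pos))
    (hPsub : P ⊆ Suid)
    (hconn : ∀ τ ∈ P, ∀ τ' ∈ P, Relation.ReflTransGen step τ τ')
    (hmax : ∀ τ ∈ Suid,
      (∀ τ' ∈ P, Relation.ReflTransGen step τ τ' ∧ Relation.ReflTransGen step τ' τ) →
      τ ∈ P) :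
    ∀ p q r : Pos, (p, q) ∈ P → (q, r) ∈ P → p ≠ r → (p, r) ∈ P := by
  intro p q r hpq hqr hpr
  have hpqS : (p, q) ∈ Suid := hPsub hpq
  have hqrS : (q, r) ∈ Suid := hPsub hqr
  have hprS : (p, r) ∈ Suid := htc p q r hpqS hqrS hpr
  have hne : (q, r) ≠ (p, q) := by
    intro h
    exact hirr (p, q) hpqS ((congrArg Prod.fst h).symm : p = q)
  -- the cycle path from (q,r) to (p,q)
  have hpath : Relation.ReflTransGen step (q, r) (p, q) := hconn _ hqr _ hpq
  -- forward: (p,r) →* (p,q), by replacing the first step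
  have hfwd : Relation.ReflTransGen step (p, r) (p, q) := by
    rcases hpath.cases_head with h | ⟨c, hc, hcp⟩
    · exact absurd h hne
    · rw [hstep] at hc
      refine Relation.ReflTransGen.head ?_ hcp
      rw [hstep]
      exact ⟨hprS, hc.2.1, hc.2.2.1, hc.2.2.2⟩
  -- backward: (q,r) →* (p,r), by replacing the last step
  have hbwd : Relation.ReflTransGen step (q, r) (p, r) := by
    rcases hpath.cases_tail with h | ⟨c, hc, hcp⟩
    · exact absurd h.symm hne
    · rw [hstep] at hcp
      refine hc.tail ?_
      rw [hstep]
      exact ⟨hcp.1, hprS, hcp.2.2.1, hcp.2.2.2⟩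
  refine hmax _ hprS fun τ' hτ' => ⟨?_, ?_⟩
  · exact hfwd.trans (hconn _ hpq _ hτ')
  · exact (hconn _ hτ' _ hqr).trans hbwd
end
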